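/- The function (p,B) ↦ p·d / (B·log₂(1 + p·h/(N₀·B))) is pseudoconvex on the domain p > 0, B > 0, for fixed constants d > 0, h > 0, N₀ > 0. (A function f is pseudoconvex if it is differentiable and whenever ∇f(x)·(y−x) ≥ 0 then f(y) ≥ f(x).) -/

import Mathlib

/-!
The denominator `B · log₂ (1 + (h / N₀) (p / B))` is the perspective of the concave
function `t ↦ log₂ (1 + (h / N₀) t)`, hence concave, and the numerator is linear.
For `u ≥ 0` convex and `g > 0` concave, write `u'`, `g'` for the derivatives at `x` in the
direction `y - x`. The quotient rule turns `(u / g)' ≥ 0` into `u x · g' ≤ u' · g x`, and the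
first-order bounds `u x + u' ≤ u y` and `g y ≤ g x + g'` then give `u x · g y ≤ u y · g x`.
-/

open Set Real

theorem DifferentiableAt.hasDerivAt_comp_lineMap {𝕜 E F : Type*} [NontriviallyNormedField 𝕜]
    [NormedAddCommGroup E] [NormedSpace 𝕜 E] [NormedAddCommGroup F] [NormedSpace 𝕜 F]
    {f : E → F} {x : E} (hf : DifferentiableAt 𝕜 f x) (y : E) :
    HasDerivAt (f ∘ AffineMap.lineMap (k := 𝕜) x y) (fderiv 𝕜 f x (y - x)) 0 :=
  HasFDerivAt.comp_hasDerivAt _ (by simpa using hf.hasFDerivAt) AffineMap.hasDerivAt_lineMap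

section

variable {E : Type*} [NormedAddCommGroup E] [NormedSpace ℝ E]

theorem ConvexOn.add_fderiv_le {s : Set E} {f : E → ℝ} (hf : ConvexOn ℝ s f)
    {x y : E} (hx : x ∈ s) (hy : y ∈ s) (hfx : DifferentiableAt ℝ f x) :
    f x + fderiv ℝ f x (y - x) ≤ f y := by
  have hline : ConvexOn ℝ (Icc (0 : ℝ) 1) (f ∘ AffineMap.lineMap x y) :=
    (hf.comp_affineMap _).subset (hf.1.mapsTo_lineMap hx hy) (convex_Icc 0 1)
  have := hline.le_slope_of_hasDerivAt (left_mem_Icc.2 zero_le_one)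
    (right_mem_Icc.2 zero_le_one) zero_lt_one (hfx.hasDerivAt_comp_lineMap y)
  simp only [slope_def_field, Function.comp_apply, AffineMap.lineMap_apply_zero,
    AffineMap.lineMap_apply_one, sub_zero, div_one] at this
  linarith

theorem ConcaveOn.le_add_fderiv {s : Set E} {f : E → ℝ} (hf : ConcaveOn ℝ s f)
    {x y : E} (hx : x ∈ s) (hy : y ∈ s) (hfx : DifferentiableAt ℝ f x) :
    f y ≤ f x + fderiv ℝ f x (y - x) := by
  have := hf.neg.add_fderiv_le hx hy hfx.neg
  simp only [fderiv_neg, Pi.neg_apply, neg_apply] at this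
  linarith

def PseudoconvexOn (s : Set E) (f : E → ℝ) : Prop :=
  (∀ x ∈ s, DifferentiableAt ℝ f x) ∧
    ∀ x ∈ s, ∀ y ∈ s, 0 ≤ fderiv ℝ f x (y - x) → f x ≤ f y

theorem ConvexOn.pseudoconvexOn_div {s : Set E} {u g : E → ℝ} (hu : ConvexOn ℝ s u)
    (hg : ConcaveOn ℝ s g) (hu0 : ∀ x ∈ s, 0 ≤ u x) (hg0 : ∀ x ∈ s, 0 < g x)
    (hud : ∀ x ∈ s, DifferentiableAt ℝ u x) (hgd : ∀ x ∈ s, DifferentiableAt ℝ g x) :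
    PseudoconvexOn s (fun x => u x / g x) := by
  have hdiv : ∀ x ∈ s, DifferentiableAt ℝ (fun x => u x / g x) x := fun x hx => by
    have := hud x hx
    have := hgd x hx
    fun_prop (disch := exact (hg0 x hx).ne')
  refine ⟨hdiv, fun x hx y hy hxy => ?_⟩
  set u' := fderiv ℝ u x (y - x)
  set g' := fderiv ℝ g x (y - x)
  have hquot : fderiv ℝ (fun x => u x / g x) x (y - x) = (u' * g x - u x * g') / g x ^ 2 := by
    have h := ((hud x hx).hasDerivAt_comp_lineMap y).div ((hgd x hx).hasDerivAt_comp_lineMap y)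
      (by simpa using (hg0 x hx).ne')
    simp only [Function.comp_apply, AffineMap.lineMap_apply_zero] at h
    exact ((hdiv x hx).hasDerivAt_comp_lineMap y).unique h
  have hcross : u x * g' ≤ u' * g x := by
    rw [hquot, le_div_iff₀ (pow_pos (hg0 x hx) 2), zero_mul, sub_nonneg] at hxy
    exact hxy
  have hgy : g y ≤ g x + g' := hg.le_add_fderiv hx hy (hgd x hx)
  have hux : u x + u' ≤ u y := hu.add_fderiv_le hx hy (hud x hx)
  show u x / g x ≤ u y / g y
  rw [div_le_div_iff₀ (hg0 x hx) (hg0 y hy)]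
  calc u x * g y ≤ u x * (g x + g') := mul_le_mul_of_nonneg_left hgy (hu0 x hx)
    _ ≤ (u x + u') * g x := by linarith
    _ ≤ u y * g x := mul_le_mul_of_nonneg_right hux (hg0 x hx).le

end

theorem ConcaveOn.perspective {φ : ℝ → ℝ} (hφ : ConcaveOn ℝ (Ioi 0) φ) :
    ConcaveOn ℝ (Ioi 0 ×ˢ Ioi 0) (fun x : ℝ × ℝ => x.2 * φ (x.1 / x.2)) := by
  have hconv : Convex ℝ (Ioi (0 : ℝ) ×ˢ Ioi (0 : ℝ)) := (convex_Ioi 0).prod (convex_Ioi 0)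
  refine ⟨hconv, fun x hx y hy a b ha hb hab => ?_⟩
  have hB : 0 < a * x.2 + b * y.2 := by simpa using (hconv hx hy ha hb hab).2
  obtain ⟨hx1, hx2⟩ := hx
  obtain ⟨hy1, hy2⟩ := hy
  simp only [mem_Ioi] at hx1 hx2 hy1 hy2
  set B := a * x.2 + b * y.2
  have hφ' := hφ.2 (mem_Ioi.2 (div_pos hx1 hx2)) (mem_Ioi.2 (div_pos hy1 hy2))
    (div_nonneg (mul_nonneg ha hx2.le) hB.le) (div_nonneg (mul_nonneg hb hy2.le) hB.le)
    (by rw [← add_div, div_self hB.ne'])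
  have hcomb :
      a * x.2 / B * (x.1 / x.2) + b * y.2 / B * (y.1 / y.2) = (a * x.1 + b * y.1) / B := by
    field_simp
  simp only [smul_eq_mul, Prod.fst_add, Prod.snd_add, Prod.smul_fst, Prod.smul_snd] at hφ' ⊢
  rw [hcomb] at hφ'
  calc a * (x.2 * φ (x.1 / x.2)) + b * (y.2 * φ (y.1 / y.2))
      = B * (a * x.2 / B * φ (x.1 / x.2) + b * y.2 / B * φ (y.1 / y.2)) := by
        field_simp
    _ ≤ B * φ ((a * x.1 + b * y.1) / B) := mul_le_mul_of_nonneg_left hφ' hB.le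

theorem concaveOn_logb_one_add_mul {b c : ℝ} (hb : 1 < b) (hc : 0 ≤ c) :
    ConcaveOn ℝ (Ioi 0) (fun t => logb b (1 + c * t)) := by
  refine ⟨convex_Ioi 0, fun x hx y hy α β hα hβ hαβ => ?_⟩
  have hpos : ∀ t ∈ Ioi (0 : ℝ), 1 + c * t ∈ Ioi 0 := fun t ht =>
    add_pos_of_pos_of_nonneg one_pos (mul_nonneg hc (le_of_lt ht))
  have hlog := strictConcaveOn_log_Ioi.concaveOn.2 (hpos x hx) (hpos y hy) hα hβ hαβ
  have hcomb : α • (1 + c * x) + β • (1 + c * y) = 1 + c * (α • x + β • y) := by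
    simp only [smul_eq_mul]; linear_combination hαβ
  rw [hcomb] at hlog
  simp only [smul_eq_mul, logb] at hlog ⊢
  rw [← mul_div_assoc, ← mul_div_assoc, ← add_div]
  exact div_le_div_of_nonneg_right hlog (log_pos hb).le

/-- The transmission-energy ratio `(p,B) ↦ p·d / (B·log₂(1 + p·h/(N₀·B)))` is pseudoconvex
on `p > 0, B > 0`: it is differentiable there, and whenever the directional derivative
`∇f(x)·(y−x)` is nonnegative one has `f(y) ≥ f(x)`. -/
theorem energy_ratio_pseudoconvex (d h N₀ : ℝ) (hd : 0 < d) (hh : 0 < h) (hN₀ : 0 < N₀) :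
    (∀ x : ℝ × ℝ, 0 < x.1 → 0 < x.2 →
      DifferentiableAt ℝ
        (fun x : ℝ × ℝ => x.1 * d / (x.2 * Real.logb 2 (1 + x.1 * h / (N₀ * x.2)))) x) ∧
    (∀ x y : ℝ × ℝ, 0 < x.1 → 0 < x.2 → 0 < y.1 → 0 < y.2 →
      0 ≤ fderiv ℝ
        (fun x : ℝ × ℝ => x.1 * d / (x.2 * Real.logb 2 (1 + x.1 * h / (N₀ * x.2)))) x (y - x) →
      x.1 * d / (x.2 * Real.logb 2 (1 + x.1 * h / (N₀ * x.2))) ≤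
        y.1 * d / (y.2 * Real.logb 2 (1 + y.1 * h / (N₀ * y.2)))) := by
  let s : Set (ℝ × ℝ) := Ioi 0 ×ˢ Ioi 0
  let g : ℝ × ℝ → ℝ := fun x => x.2 * logb 2 (1 + x.1 * h / (N₀ * x.2))
  have hg : ConcaveOn ℝ s g := by
    convert (concaveOn_logb_one_add_mul one_lt_two (div_pos hh hN₀).le).perspective using 4
    ring
  have hg0 : ∀ x ∈ s, 0 < g x := fun x ⟨hx1, hx2⟩ =>
    mul_pos hx2 <| logb_pos one_lt_two <|
      lt_add_of_pos_right 1 (div_pos (mul_pos hx1 hh) (mul_pos hN₀ hx2))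
  have hgd : ∀ x ∈ s, DifferentiableAt ℝ g x := fun x ⟨hx1, hx2⟩ => by
    simp only [mem_Ioi] at hx1 hx2
    simp only [g, logb]
    fun_prop (disch := positivity)
  have hu : ConvexOn ℝ s (fun x => x.1 * d) :=
    ((LinearMap.fst ℝ ℝ ℝ).smulRight d).convexOn ((convex_Ioi 0).prod (convex_Ioi 0))
  have hpc : PseudoconvexOn s (fun x => x.1 * d / g x) :=
    hu.pseudoconvexOn_div hg (fun x hx => (mul_pos hx.1 hd).le) hg0 (fun _ _ => by fun_prop) hgd
  exact ⟨fun x hx1 hx2 => hpc.1 x ⟨hx1, hx2⟩,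
    fun x y hx1 hx2 hy1 hy2 => hpc.2 x ⟨hx1, hx2⟩ y ⟨hy1, hy2⟩⟩
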